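/- arXiv:2303.13200 — 4 statements merged into one kernel-verified Lean document; each statement's English description precedes it below -/
import Mathlib

section
/- Let f : [0,1] → ℝ be continuous and piecewise C¹ with minimum a and maximum b on [0,1]. Then ∫_a^b |π₀(f⁻¹((-∞,t]))| dt ≤ V(f), where |π₀(S)| denotes the number of path-components of S (possibly infinite) and V(f) = ∫₀¹ |f'(t)| dt is the total variation of f. In particular the integrand is finite for almost every t. -/
/-!
Every path component of `{x ∈ [0,1] | f x ≤ t}` other than the one of `0` starts with a descent
of `f` from above `t` to `t`. Split `[0,1]` into `n` equal cells and count the cells `[l, r]`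
with `t ∈ [min_{[l,r]} f, f l)`. As a function of `t` this count integrates to
`∑ (f l - min_{[l,r]} f) ≤ ∫ (f')⁻`, and once the mesh is finer than the gaps between finitely
many separated descents, each of them is detected by its own cell. By Fatou's lemma the number of
components therefore integrates over `[a, b]` to at most `(b - f 0) + ∫ (f')⁻`, the first term
accounting for the component of `0`, which exists only for `t ≥ f 0`; and
`b - f 0 ≤ ∫ (f')⁺` since `b` is a value of `f`.
-/

open scoped ENNReal
open Set MeasureTheory Filter

/-- A function `[0,1] → ℝ` is piecewise C¹: continuous on `[0,1]`, and there are finitely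
many closed intervals covering `[0,1]` on whose interiors it is C¹. -/
def PiecewiseC1Real (f : ℝ → ℝ) : Prop :=
  ContinuousOn f (Set.Icc 0 1) ∧
    ∃ (k : ℕ) (u v : Fin k → ℝ),
      Set.Icc (0 : ℝ) 1 ⊆ ⋃ i, Set.Icc (u i) (v i) ∧
      ∀ i, ContDiffOn ℝ 1 f (Set.Ioo (u i) (v i))

lemma PiecewiseC1Real.exists_countable_hasDerivAt {f : ℝ → ℝ} (hf : PiecewiseC1Real f) :
    ∃ s : Set ℝ, s.Countable ∧ ∀ x ∈ Ioo 0 1 \ s, HasDerivAt f (deriv f x) x := by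
  obtain ⟨-, k, u, v, hcover, hC1⟩ := hf
  refine ⟨range u ∪ range v, (countable_range u).union (countable_range v), ?_⟩
  rintro x ⟨hx, hxs⟩
  obtain ⟨i, hi⟩ := mem_iUnion.1 (hcover (Ioo_subset_Icc_self hx))
  have hxi : x ∈ Ioo (u i) (v i) :=
    ⟨hi.1.lt_of_ne fun h => hxs (Or.inl ⟨i, h⟩), hi.2.lt_of_ne fun h => hxs (Or.inr ⟨i, h.symm⟩)⟩
  exact (((hC1 i).differentiableOn one_ne_zero x hxi).differentiableAt
    (isOpen_Ioo.mem_nhds hxi)).hasDerivAt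

lemma IntervalIntegrable.posPart {f : ℝ → ℝ} {a b : ℝ} (hf : IntervalIntegrable f volume a b) :
    IntervalIntegrable (fun x => (f x)⁺) volume a b :=
  ⟨hf.1.pos_part, hf.2.pos_part⟩

lemma IntervalIntegrable.negPart {f : ℝ → ℝ} {a b : ℝ} (hf : IntervalIntegrable f volume a b) :
    IntervalIntegrable (fun x => (f x)⁻) volume a b :=
  ⟨hf.1.neg_part, hf.2.neg_part⟩

section FundamentalTheorem

variable {f f' : ℝ → ℝ} {a b p q : ℝ} {s : Set ℝ}

lemma sub_le_intervalIntegral_posPart (hap : a ≤ p) (hpq : p ≤ q) (hqb : q ≤ b)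
    (hs : s.Countable) (hcont : ContinuousOn f (Icc a b))
    (hderiv : ∀ x ∈ Ioo a b \ s, HasDerivAt f (f' x) x) (hint : IntervalIntegrable f' volume a b) :
    f q - f p ≤ ∫ x in p..q, (f' x)⁺ := by
  have hint' : IntervalIntegrable f' volume p q :=
    hint.mono_set (uIcc_subset_uIcc (mem_uIcc_of_le hap (hpq.trans hqb))
      (mem_uIcc_of_le (hap.trans hpq) hqb))
  rw [← integral_eq_of_hasDerivAt_off_countable_of_le f f' hpq hs
    (hcont.mono (Icc_subset_Icc hap hqb))
    (fun x hx => hderiv x ⟨⟨hap.trans_lt hx.1.1, hx.1.2.trans_le hqb⟩, hx.2⟩) hint']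
  exact intervalIntegral.integral_mono_on hpq hint' hint'.posPart fun x _ => le_posPart _

lemma sub_le_intervalIntegral_negPart (hap : a ≤ p) (hpq : p ≤ q) (hqb : q ≤ b)
    (hs : s.Countable) (hcont : ContinuousOn f (Icc a b))
    (hderiv : ∀ x ∈ Ioo a b \ s, HasDerivAt f (f' x) x) (hint : IntervalIntegrable f' volume a b) :
    f p - f q ≤ ∫ x in p..q, (f' x)⁻ := by
  have := sub_le_intervalIntegral_posPart (f := -f) (f' := -f') hap hpq hqb hs hcont.neg
    (fun x hx => (hderiv x hx).neg) hint.neg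
  simpa only [Pi.neg_apply, posPart_neg, neg_sub_neg] using this

end FundamentalTheorem

noncomputable def descentIndicator (f : ℝ → ℝ) (l r t : ℝ) : ℝ≥0∞ :=
  (Ico (sInf (f '' Icc l r)) (f l)).indicator (fun _ => 1) t

noncomputable def descentCount (f : ℝ → ℝ) (n : ℕ) (t : ℝ) : ℝ≥0∞ :=
  ∑ j ∈ Finset.range n, descentIndicator f (j / n : ℝ) ((j + 1 : ℕ) / n : ℝ) t

lemma measurable_descentIndicator (f : ℝ → ℝ) (l r : ℝ) : Measurable (descentIndicator f l r) :=
  measurable_const.indicator measurableSet_Ico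

lemma measurable_descentCount (f : ℝ → ℝ) (n : ℕ) : Measurable (descentCount f n) :=
  Finset.measurable_sum _ fun _ _ => measurable_descentIndicator f _ _

lemma lintegral_descentIndicator (f : ℝ → ℝ) (l r : ℝ) :
    ∫⁻ t, descentIndicator f l r t = ENNReal.ofReal (f l - sInf (f '' Icc l r)) := by
  simp [descentIndicator, lintegral_indicator measurableSet_Ico, Real.volume_Ico]

lemma descentIndicator_eq_one {f : ℝ → ℝ} {l r c t : ℝ} (hf : ContinuousOn f (Icc l r))
    (hc : c ∈ Icc l r) (hfc : f c ≤ t) (hfl : t < f l) : descentIndicator f l r t = 1 :=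
  indicator_of_mem (show t ∈ Ico _ _ from
    ⟨(csInf_le (isCompact_Icc.bddBelow_image hf) (mem_image_of_mem f hc)).trans hfc, hfl⟩) _

lemma ContinuousOn.exists_first_le {f : ℝ → ℝ} {y x t : ℝ} (hf : ContinuousOn f (Icc y x))
    (hyx : y ≤ x) (hfy : t < f y) (hfx : f x ≤ t) :
    ∃ c ∈ Ioc y x, f c ≤ t ∧ ∀ z ∈ Ico y c, t < f z := by
  set A := Icc y x ∩ f ⁻¹' Iic t
  have hA : IsClosed A := hf.preimage_isClosed_of_isClosed isClosed_Icc isClosed_Iic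
  have hAbdd : BddBelow A := bddBelow_Icc.mono inter_subset_left
  have hAne : A.Nonempty := ⟨x, ⟨hyx, le_rfl⟩, hfx⟩
  obtain ⟨⟨hyc, hcx⟩, hfc⟩ := hA.csInf_mem hAne hAbdd
  refine ⟨sInf A, ⟨hyc.lt_of_ne ?_, hcx⟩, hfc, fun z hz => ?_⟩
  · rintro hy
    exact (hy ▸ hfc : f y ≤ t).not_gt hfy
  · by_contra! hfz
    exact hz.2.not_ge (csInf_le hAbdd ⟨⟨hz.1, hz.2.le.trans hcx⟩, hfz⟩)

section Descents

variable {f f' : ℝ → ℝ} {s : Set ℝ}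

lemma sub_sInf_image_le_intervalIntegral_negPart {l r : ℝ} (hl : 0 ≤ l) (hlr : l ≤ r) (hr : r ≤ 1)
    (hs : s.Countable) (hcont : ContinuousOn f (Icc 0 1))
    (hderiv : ∀ x ∈ Ioo 0 1 \ s, HasDerivAt f (f' x) x) (hint : IntervalIntegrable f' volume 0 1) :
    f l - sInf (f '' Icc l r) ≤ ∫ x in l..r, (f' x)⁻ := by
  have hlr₀ : Icc l r ⊆ Icc 0 1 := Icc_subset_Icc hl hr
  obtain ⟨z, hz, hmin⟩ := isCompact_Icc.exists_isMinOn (nonempty_Icc.2 hlr) (hcont.mono hlr₀)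
  rw [IsLeast.csInf_eq ⟨mem_image_of_mem f hz, forall_mem_image.2 fun x hx => hmin hx⟩]
  calc f l - f z ≤ ∫ x in l..z, (f' x)⁻ :=
        sub_le_intervalIntegral_negPart hl hz.1 (hz.2.trans hr) hs hcont hderiv hint
    _ ≤ ∫ x in l..r, (f' x)⁻ :=
        intervalIntegral.integral_mono_interval le_rfl hz.1 hz.2
          (Eventually.of_forall fun x => negPart_nonneg _)
          (hint.mono_set (uIcc_subset_uIcc (mem_uIcc_of_le hl (hlr.trans hr))
            (mem_uIcc_of_le (hl.trans hlr) hr))).negPart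

lemma lintegral_descentCount_le (hs : s.Countable) (hcont : ContinuousOn f (Icc 0 1))
    (hderiv : ∀ x ∈ Ioo 0 1 \ s, HasDerivAt f (f' x) x) (hint : IntervalIntegrable f' volume 0 1)
    (n : ℕ) : ∫⁻ t, descentCount f n t ≤ ENNReal.ofReal (∫ x in (0 : ℝ)..1, (f' x)⁻) := by
  rcases n.eq_zero_or_pos with rfl | hn
  · simp [descentCount]
  have hn' : (0 : ℝ) < n := Nat.cast_pos.2 hn
  have hnode : ∀ j ≤ n, (j / n : ℝ) ∈ Icc 0 1 := fun j hj =>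
    ⟨by positivity, div_le_one_of_le₀ (Nat.cast_le.2 hj) hn'.le⟩
  have hcell : ∀ j < n, (j / n : ℝ) ≤ ((j + 1 : ℕ) / n : ℝ) := fun j _ =>
    div_le_div_of_nonneg_right (Nat.cast_le.2 j.le_succ) hn'.le
  calc ∫⁻ t, descentCount f n t
        = ∑ j ∈ Finset.range n,
            ENNReal.ofReal (f (j / n) - sInf (f '' Icc (j / n : ℝ) ((j + 1 : ℕ) / n))) := by
          simp only [descentCount]
          rw [lintegral_finsetSum _ fun _ _ => measurable_descentIndicator f _ _]
          simp only [lintegral_descentIndicator]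
    _ ≤ ∑ j ∈ Finset.range n,
          ENNReal.ofReal (∫ x in (j / n : ℝ)..((j + 1 : ℕ) / n : ℝ), (f' x)⁻) := by
          gcongr with j hj
          have hj := Finset.mem_range.1 hj
          exact sub_sInf_image_le_intervalIntegral_negPart (hnode j hj.le).1 (hcell j hj)
            (hnode (j + 1) hj).2 hs hcont hderiv hint
    _ = ENNReal.ofReal (∑ j ∈ Finset.range n,
          ∫ x in (j / n : ℝ)..((j + 1 : ℕ) / n : ℝ), (f' x)⁻) :=
          (ENNReal.ofReal_sum_of_nonneg fun j hj => intervalIntegral.integral_nonneg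
            (hcell j (Finset.mem_range.1 hj)) fun x _ => negPart_nonneg _).symm
    _ = ENNReal.ofReal (∫ x in (0 : ℝ)..1, (f' x)⁻) := by
          rw [intervalIntegral.sum_integral_adjacent_intervals (a := fun j : ℕ => (j / n : ℝ))
            fun j hj => hint.negPart.mono_set (uIcc_subset_uIcc (Icc_subset_uIcc (hnode j hj.le))
              (Icc_subset_uIcc (hnode (j + 1) hj)))]
          simp [hn'.ne']

lemma eventually_exists_descentIndicator_eq_one (hcont : ContinuousOn f (Icc 0 1)) {y x t : ℝ}
    (hy : 0 ≤ y) (hyx : y < x) (hx : x ≤ 1) (hfy : t < f y) (hfx : f x ≤ t) :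
    ∀ᶠ n : ℕ in atTop, ∃ j < n,
      (j / n : ℝ) ∈ Ioc y x ∧ descentIndicator f (j / n) ((j + 1 : ℕ) / n) t = 1 := by
  obtain ⟨c, ⟨hyc, hcx⟩, hfc, hbefore⟩ :=
    (hcont.mono (Icc_subset_Icc hy hx)).exists_first_le hyx.le hfy hfx
  have hmesh : ∀ᶠ n : ℕ in atTop, (1 / n : ℝ) < c - y :=
    tendsto_one_div_atTop_nhds_zero_nat.eventually (gt_mem_nhds (sub_pos.2 hyc))
  filter_upwards [hmesh, eventually_gt_atTop 0] with n hmesh hn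
  have hn' : (0 : ℝ) < n := Nat.cast_pos.2 hn
  -- `j` is the index of the cell `(j/n, (j+1)/n]` containing the first hitting point `c`
  obtain ⟨j, hj⟩ : ∃ j, ⌈c * n⌉₊ = j + 1 :=
    Nat.exists_eq_add_one.2 (Nat.ceil_pos.2 (by nlinarith))
  have hjc : (j / n : ℝ) < c := by
    have := Nat.ceil_lt_add_one (by nlinarith : 0 ≤ c * n)
    rw [hj, Nat.cast_succ] at this
    rw [div_lt_iff₀ hn']
    linarith
  have hcj : c ≤ ((j + 1 : ℕ) / n : ℝ) := by
    rw [le_div_iff₀ hn', ← hj]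
    exact Nat.le_ceil _
  have hjn : j + 1 ≤ n := by
    rw [← hj, Nat.ceil_le]
    nlinarith [hcx.trans hx]
  have hyj : y < j / n := by
    have : ((j + 1 : ℕ) / n : ℝ) = j / n + 1 / n := by push_cast; ring
    linarith
  refine ⟨j, hjn, ⟨hyj, hjc.le.trans hcx⟩,
    descentIndicator_eq_one (hcont.mono (Icc_subset_Icc (by positivity) ?_)) ⟨hjc.le, hcj⟩ hfc
      (hbefore _ ⟨hyj.le, hjc⟩)⟩
  exact div_le_one_of_le₀ (Nat.cast_le.2 hjn) hn'.le

lemma eventually_natCast_le_descentCount (hcont : ContinuousOn f (Icc 0 1)) {t : ℝ} {m : ℕ}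
    {y x : Fin m → ℝ} (hy : ∀ i, 0 ≤ y i) (hyx : ∀ i, y i < x i) (hx : ∀ i, x i ≤ 1)
    (hfy : ∀ i, t < f (y i)) (hfx : ∀ i, f (x i) ≤ t) (hxy : ∀ i j, i < j → x i ≤ y j) :
    ∀ᶠ n in atTop, (m : ℝ≥0∞) ≤ descentCount f n t := by
  filter_upwards [eventually_all.2 fun i =>
    eventually_exists_descentIndicator_eq_one hcont (hy i) (hyx i) (hx i) (hfy i) (hfx i)]
    with n hn
  choose J hJn hJ hJone using hn
  have hJmono : StrictMono J := fun i i' hii' => by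
    have hn' : (0 : ℝ) < n := Nat.cast_pos.2 ((J i).zero_le.trans_lt (hJn i))
    have : (J i / n : ℝ) < J i' / n := (hJ i).2.trans_lt ((hxy i i' hii').trans_lt (hJ i').1)
    exact_mod_cast (div_lt_div_iff_of_pos_right hn').1 this
  calc (m : ℝ≥0∞) = ∑ j ∈ Finset.univ.image J,
        descentIndicator f (j / n : ℝ) ((j + 1 : ℕ) / n : ℝ) t := by
        rw [Finset.sum_image fun i _ i' _ h => hJmono.injective h]
        simp only [hJone, Finset.sum_const, Finset.card_univ, Fintype.card_fin, nsmul_one]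
    _ ≤ descentCount f n t :=
        Finset.sum_le_sum_of_subset fun j hj => by
          obtain ⟨i, -, rfl⟩ := Finset.mem_image.1 hj
          exact Finset.mem_range.2 (hJn i)

end Descents

lemma exists_strictMono_pairwise_not_joinedIn {α : Type*} [LinearOrder α] [TopologicalSpace α]
    {S : Set α} {n : ℕ} (h : (n : ℕ∞) ≤ ENat.card (ZerothHomotopy S)) :
    ∃ x : Fin n → α, StrictMono x ∧ (∀ i, x i ∈ S) ∧ ∀ i j, i ≠ j → ¬ JoinedIn S (x i) (x j) := by
  obtain ⟨g⟩ : Nonempty (Fin n ↪ ZerothHomotopy S) := by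
    rw [ENat.card, Cardinal.natCast_le_toENat] at h
    exact Cardinal.lift_mk_le'.1 (by simpa using h)
  let p : Fin n → α := fun i => (g i).out
  have hsep : ∀ i j, JoinedIn S (p i) (p j) → i = j := fun i j hij =>
    g.injective <| by
      rw [← Quotient.out_eq (g i), ← Quotient.out_eq (g j)]
      exact Quotient.sound hij.joined_subtype
  have hp : Function.Injective p := fun i j hij => hsep i j (hij ▸ JoinedIn.refl (g i).out.2)
  have hcard : (Finset.univ.image p).card = n := by
    rw [Finset.card_image_of_injective _ hp, Finset.card_univ, Fintype.card_fin]
  let x := (Finset.univ.image p).orderEmbOfFin hcard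
  have hx : ∀ i, ∃ k, p k = x i := fun i => by
    obtain ⟨k, -, hk⟩ := Finset.mem_image.1 ((Finset.univ.image p).orderEmbOfFin_mem hcard i)
    exact ⟨k, hk⟩
  refine ⟨x, x.strictMono, fun i => ?_, fun i j hij hjoined => hij ?_⟩
  · obtain ⟨k, hk⟩ := hx i
    exact hk ▸ (g k).out.2
  · obtain ⟨k, hk⟩ := hx i
    obtain ⟨k', hk'⟩ := hx j
    rw [← hk, ← hk'] at hjoined
    exact x.injective (by rw [← hk, ← hk', hsep k k' hjoined])

lemma joinedIn_of_Ioo_subset {S : Set ℝ} {a b : ℝ} (hab : a ≤ b) (ha : a ∈ S) (hb : b ∈ S)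
    (hS : Ioo a b ⊆ S) : JoinedIn S a b := by
  refine JoinedIn.of_segment_subset ?_
  rw [segment_eq_Icc hab]
  intro z ⟨haz, hzb⟩
  rcases haz.eq_or_lt with rfl | haz
  · exact ha
  rcases hzb.eq_or_lt with rfl | hzb
  · exact hb
  exact hS ⟨haz, hzb⟩

lemma ENat.toENNReal_le_of_forall_natCast_le {x : ℕ∞} {y : ℝ≥0∞}
    (h : ∀ m : ℕ, (m : ℕ∞) ≤ x → (m : ℝ≥0∞) ≤ y) : (x : ℝ≥0∞) ≤ y := by
  induction x using ENat.recTopCoe with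
  | top =>
    rw [ENat.toENNReal_top, top_le_iff]
    refine ENNReal.eq_top_of_forall_nnreal_le fun r => ?_
    exact le_trans (by exact_mod_cast Nat.le_ceil r) (h ⌈r⌉₊ le_top)
  | coe m => simpa using h m le_rfl

noncomputable def componentBound (f : ℝ → ℝ) (t : ℝ) : ℝ≥0∞ :=
  (Ici (f 0)).indicator (fun _ => 1) t + liminf (fun n => descentCount f n t) atTop

lemma measurable_componentBound (f : ℝ → ℝ) : Measurable (componentBound f) :=
  (measurable_const.indicator measurableSet_Ici).add (.liminf (measurable_descentCount f))

lemma card_zerothHomotopy_sublevel_le_componentBound {f : ℝ → ℝ}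
    (hcont : ContinuousOn f (Icc 0 1)) (t : ℝ) :
    (ENat.card (ZerothHomotopy ↥{x ∈ Icc (0 : ℝ) 1 | f x ≤ t}) : ℝ≥0∞) ≤ componentBound f t := by
  rw [componentBound]
  refine ENat.toENNReal_le_of_forall_natCast_le fun m hm => ?_
  rcases m with _ | m
  · simp
  obtain ⟨x, hxmono, hxS, hsep⟩ := exists_strictMono_pairwise_not_joinedIn hm
  have hgap : ∀ i : Fin m, ∃ y ∈ Ioo (x i.castSucc) (x i.succ), t < f y := fun i => by
    by_contra! hle
    refine hsep _ _ (Fin.castSucc_lt_succ (i := i)).ne (joinedIn_of_Ioo_subset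
      (hxmono (Fin.castSucc_lt_succ (i := i))).le (hxS _) (hxS _) fun y hy => ⟨?_, hle y hy⟩)
    exact ⟨(hxS _).1.1.trans hy.1.le, hy.2.le.trans (hxS _).1.2⟩
  choose y hy hfy using hgap
  by_cases h0 : f 0 ≤ t
  · -- the component of `x 0` may contain `0`; each later `x i` is preceded by a descent
    have := le_liminf_of_le (by isBoundedDefault) <|
      eventually_natCast_le_descentCount hcont (y := y) (x := x ∘ Fin.succ)
        (fun i => (hxS _).1.1.trans (hy i).1.le) (fun i => (hy i).2) (fun i => (hxS _).1.2) hfy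
        (fun i => (hxS _).2)
        (fun i j hij => (hxmono.monotone (Fin.succ_le_castSucc_iff.2 hij)).trans (hy j).1.le)
    rw [indicator_of_mem (show t ∈ Ici (f 0) from h0), Nat.cast_succ, add_comm]
    gcongr
  · -- descending from `f 0 > t` to `x 0` is one more descent
    rw [indicator_of_notMem (show t ∉ Ici (f 0) from h0), zero_add]
    exact le_liminf_of_le (by isBoundedDefault) <|
      eventually_natCast_le_descentCount hcont (y := Fin.cons 0 y) (x := x)
        (Fin.cases le_rfl fun i => (hxS _).1.1.trans (hy i).1.le)
        (Fin.cases (((hxS 0).1.1).lt_of_ne fun h => h0 (h ▸ (hxS 0).2)) fun i => (hy i).2)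
        (fun i => (hxS i).1.2) (Fin.cases (not_le.1 h0) hfy) (fun i => (hxS i).2)
        (fun i => Fin.cases (fun hij => absurd hij (Fin.not_lt_zero i)) fun j hij =>
          (hxmono.monotone (Fin.le_castSucc_iff.2 hij)).trans (hy j).1.le)

lemma setLIntegral_componentBound_le {f f' : ℝ → ℝ} {s : Set ℝ} (hs : s.Countable)
    (hcont : ContinuousOn f (Icc 0 1)) (hderiv : ∀ x ∈ Ioo 0 1 \ s, HasDerivAt f (f' x) x)
    (hint : IntervalIntegrable f' volume 0 1) {a b : ℝ} (hb : b ∈ f '' Icc 0 1) :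
    ∫⁻ t in Icc a b, componentBound f t ≤ ENNReal.ofReal (∫ x in (0 : ℝ)..1, |f' x|) := by
  obtain ⟨x₁, hx₁, rfl⟩ := hb
  have hrise : ∫⁻ t in Icc a (f x₁), (Ici (f 0)).indicator (fun _ => 1) t ≤
      ENNReal.ofReal (∫ x in (0 : ℝ)..1, (f' x)⁺) := by
    rw [lintegral_indicator_const measurableSet_Ici, one_mul,
      Measure.restrict_apply measurableSet_Ici]
    calc volume (Ici (f 0) ∩ Icc a (f x₁)) ≤ volume (Icc (f 0) (f x₁)) :=
          measure_mono fun t ht => ⟨ht.1, ht.2.2⟩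
      _ = ENNReal.ofReal (f x₁ - f 0) := Real.volume_Icc
      _ ≤ _ := ENNReal.ofReal_le_ofReal <|
          (sub_le_intervalIntegral_posPart le_rfl hx₁.1 hx₁.2 hs hcont hderiv hint).trans <|
            intervalIntegral.integral_mono_interval le_rfl hx₁.1 hx₁.2
              (Eventually.of_forall fun x => posPart_nonneg _) hint.posPart
  have hdescent : ∫⁻ t in Icc a (f x₁), liminf (fun n => descentCount f n t) atTop ≤
      ENNReal.ofReal (∫ x in (0 : ℝ)..1, (f' x)⁻) :=
    calc _ ≤ ∫⁻ t, liminf (fun n => descentCount f n t) atTop := setLIntegral_le_lintegral _ _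
      _ ≤ liminf (fun n => ∫⁻ t, descentCount f n t) atTop :=
          lintegral_liminf_le (measurable_descentCount f)
      _ ≤ _ := liminf_le_of_frequently_le' <| .of_forall
          (lintegral_descentCount_le hs hcont hderiv hint)
  simp only [componentBound]
  rw [lintegral_add_left (measurable_const.indicator measurableSet_Ici)]
  calc _ ≤ ENNReal.ofReal (∫ x in (0 : ℝ)..1, (f' x)⁺) +
        ENNReal.ofReal (∫ x in (0 : ℝ)..1, (f' x)⁻) := add_le_add hrise hdescent
    _ = ENNReal.ofReal (∫ x in (0 : ℝ)..1, |f' x|) := by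
        rw [← ENNReal.ofReal_add
            (intervalIntegral.integral_nonneg zero_le_one fun x _ => posPart_nonneg _)
            (intervalIntegral.integral_nonneg zero_le_one fun x _ => negPart_nonneg _),
          ← intervalIntegral.integral_add hint.posPart hint.negPart]
        simp only [posPart_add_negPart]

theorem integral_components_le_variation_general (f : ℝ → ℝ) (hf : PiecewiseC1Real f)
    (hint : MeasureTheory.IntegrableOn (fun t => |deriv f t|) (Set.Icc 0 1))
    (a b : ℝ)
    (hb_mem : b ∈ f '' Set.Icc 0 1) :
    (∫⁻ t in Set.Icc a b,
        ((ENat.card (ZerothHomotopy ↥{x ∈ Set.Icc (0 : ℝ) 1 | f x ≤ t}) : ℕ∞) : ℝ≥0∞)) ≤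
      ENNReal.ofReal (∫ t in Set.Icc (0 : ℝ) 1, |deriv f t|) ∧
    ∀ᵐ t ∂(MeasureTheory.volume.restrict (Set.Icc a b)),
      ENat.card (ZerothHomotopy ↥{x ∈ Set.Icc (0 : ℝ) 1 | f x ≤ t}) ≠ ⊤ := by
  obtain ⟨s, hs, hderiv⟩ := hf.exists_countable_hasDerivAt
  have hint' : IntervalIntegrable (deriv f) volume 0 1 :=
    (intervalIntegrable_iff_integrableOn_Icc_of_le zero_le_one).2 <|
      (integrable_norm_iff (measurable_deriv f).aestronglyMeasurable).1 hint
  have hcard := card_zerothHomotopy_sublevel_le_componentBound hf.1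
  have hbound : ∫⁻ t in Icc a b, componentBound f t ≤
      ENNReal.ofReal (∫ t in Icc (0 : ℝ) 1, |deriv f t|) := by
    rw [integral_Icc_eq_integral_Ioc, ← intervalIntegral.integral_of_le zero_le_one]
    exact setLIntegral_componentBound_le hs hf.1 hderiv hint' hb_mem
  refine ⟨(lintegral_mono hcard).trans hbound, ?_⟩
  filter_upwards [ae_lt_top (measurable_componentBound f)
    (hbound.trans_lt ENNReal.ofReal_lt_top).ne] with t ht htop
  simpa [htop] using (hcard t).trans_lt ht

/-- For a continuous piecewise C¹ function `f : [0,1] → ℝ` with minimum `a` and maximum `b`,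
`∫_a^b |π₀(f⁻¹((-∞,t]))| dt ≤ V(f) = ∫₀¹ |f'|`, where the number of path-components may be
infinite and the integral is taken in the extended sense; in particular the number of
path-components of the sublevel set is finite for almost every `t ∈ [a,b]`. -/
theorem integral_components_le_variation (f : ℝ → ℝ) (hf : PiecewiseC1Real f)
    (hint : MeasureTheory.IntegrableOn (fun t => |deriv f t|) (Set.Icc 0 1))
    (a b : ℝ)
    (ha_mem : a ∈ f '' Set.Icc 0 1) (ha_min : ∀ x ∈ Set.Icc (0 : ℝ) 1, a ≤ f x)
    (hb_mem : b ∈ f '' Set.Icc 0 1) (hb_max : ∀ x ∈ Set.Icc (0 : ℝ) 1, f x ≤ b) :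
    (∫⁻ t in Set.Icc a b,
        ((ENat.card (ZerothHomotopy ↥{x ∈ Set.Icc (0 : ℝ) 1 | f x ≤ t}) : ℕ∞) : ℝ≥0∞)) ≤
      ENNReal.ofReal (∫ t in Set.Icc (0 : ℝ) 1, |deriv f t|) ∧
    ∀ᵐ t ∂(MeasureTheory.volume.restrict (Set.Icc a b)),
      ENat.card (ZerothHomotopy ↥{x ∈ Set.Icc (0 : ℝ) 1 | f x ≤ t}) ≠ ⊤ :=
  integral_components_le_variation_general f hf hint a b hb_mem
end

section
/- Let γ : [0, L] → ℝ^d be a twice continuously differentiable curve parametrized by arc length whose curvature is bounded in norm by M > 0. Then for every 0 < ε < π/M and every t ∈ [0, L − ε], we have ε ≥ ‖γ(t+ε) − γ(t)‖₂ ≥ (2/M)·sin(Mε/2). -/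
/-!
Let `T = γ'` be the unit tangent and `m` the midpoint of `[t, t + ε]`. Since `T` moves on the unit
sphere with speed at most `M`, the angle between `T s` and `T m` is at most `M |s - m| < π / 2`,
so `⟪T s, T m⟫ ≥ cos (M (s - m))`. Integrating over `[t, t + ε]` gives
`‖γ (t + ε) - γ t‖ ≥ ⟪γ (t + ε) - γ t, T m⟫ ≥ (2 / M) sin (M ε / 2)`; the upper bound is the
mean value inequality for a unit-speed curve.
-/

open Real Set Filter InnerProductGeometry
open scoped RealInnerProductSpace Topology

section InnerProduct

variable {E : Type*} [NormedAddCommGroup E] [InnerProductSpace ℝ E]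

theorem abs_inner_le_norm_mul_sqrt_one_sub_inner_sq {v x w : E} (hx : ‖x‖ = 1) (hw : ‖w‖ = 1)
    (hvx : ⟪v, x⟫ = 0) : |⟪v, w⟫| ≤ ‖v‖ * √(1 - ⟪x, w⟫ ^ 2) := by
  have hproj : ⟪v, w⟫ = ⟪v, w - ⟪x, w⟫ • x⟫ := by
    rw [inner_sub_right, real_inner_smul_right, hvx, mul_zero, sub_zero]
  have hnorm : ‖w - ⟪x, w⟫ • x‖ = √(1 - ⟪x, w⟫ ^ 2) := by
    rw [← sqrt_sq (norm_nonneg _), norm_sub_sq_real, real_inner_smul_right, norm_smul, hx, hw,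
      real_inner_comm, Real.norm_eq_abs]
    ring_nf
    rw [sq_abs]
    ring_nf
  rw [hproj, ← hnorm]
  exact abs_real_inner_le_norm _ _

theorem inner_eq_zero_of_hasDerivWithinAt_of_norm_eq {g : ℝ → E} {g' : E} {J : Set ℝ} {s r : ℝ}
    (hJ : UniqueDiffWithinAt ℝ J s) (hs : s ∈ J) (hg : HasDerivWithinAt g g' J s)
    (hr : ∀ u ∈ J, ‖g u‖ = r) : ⟪g s, g'⟫ = 0 := by
  have hconst : HasDerivWithinAt (‖g ·‖ ^ 2) 0 J s :=
    (hasDerivWithinAt_const s J (r ^ 2)).congr (fun u hu => by rw [hr u hu]) (by rw [hr s hs])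
  have := hJ.eq_deriv _ hg.norm_sq hconst
  linarith

end InnerProduct

section Arccos

variable {J : Set ℝ} {h h' : ℝ → ℝ} {M : ℝ}

theorem abs_arccos_mul_sub_arccos_mul_le (hJ : Convex ℝ J) (hM : 0 ≤ M)
    (hh : ∀ u ∈ J, HasDerivWithinAt h (h' u) J u) (habs : ∀ u ∈ J, |h u| ≤ 1)
    (hh' : ∀ u ∈ J, |h' u| ≤ M * √(1 - h u ^ 2)) {k : ℝ} (hk : k ∈ Ioo 0 1) {a b : ℝ}
    (ha : a ∈ J) (hb : b ∈ J) : |arccos (k * h b) - arccos (k * h a)| ≤ M * |b - a| := by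
  obtain ⟨hk0, hk1⟩ := hk
  have hlt : ∀ u ∈ J, (k * h u) ^ 2 < 1 := fun u hu => by
    have hh1 : h u ^ 2 ≤ 1 := by rw [← sq_abs]; exact pow_le_one₀ (abs_nonneg _) (habs u hu)
    have hk2 : k ^ 2 < 1 := by nlinarith
    rw [mul_pow]
    nlinarith [mul_le_mul_of_nonneg_left hh1 (sq_nonneg k)]
  have hderiv : ∀ u ∈ J, HasDerivWithinAt (fun u => arccos (k * h u))
      (-(1 / √(1 - (k * h u) ^ 2)) * (k * h' u)) J u := fun u hu => by
    have hne := (sq_lt_one_iff_abs_lt_one _).1 (hlt u hu)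
    exact (hasDerivAt_arccos (by intro hc; simp [hc] at hne) (by intro hc; simp [hc] at hne)
      ).comp_hasDerivWithinAt u ((hh u hu).const_mul k)
  refine hJ.norm_image_sub_le_of_norm_hasDerivWithin_le hderiv (fun u hu => ?_) ha hb
  have hpos : 0 < √(1 - (k * h u) ^ 2) := sqrt_pos.2 (by linarith [hlt u hu])
  have hshrink : k * √(1 - h u ^ 2) ≤ √(1 - (k * h u) ^ 2) := by
    have hk : k * √(1 - h u ^ 2) = √(k ^ 2 * (1 - h u ^ 2)) := by
      rw [sqrt_mul (sq_nonneg k), sqrt_sq hk0.le]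
    rw [hk]
    exact sqrt_le_sqrt (by nlinarith [sq_nonneg (h u)])
  rw [norm_mul, norm_neg, norm_div, norm_one, Real.norm_of_nonneg hpos.le, Real.norm_eq_abs,
    abs_mul, abs_of_pos hk0, one_div_mul_eq_div, div_le_iff₀ hpos]
  calc k * |h' u| ≤ k * (M * √(1 - h u ^ 2)) := mul_le_mul_of_nonneg_left (hh' u hu) hk0.le
    _ = M * (k * √(1 - h u ^ 2)) := by ring
    _ ≤ M * √(1 - (k * h u) ^ 2) := mul_le_mul_of_nonneg_left hshrink hM

/-- The derivative of `arccos ∘ h` would be `-h' / √(1 - h²)`, bounded by `M`; since `arccos` is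
not differentiable at `±1`, the estimate is proved for `arccos (k * h)`, `k < 1`, and `k → 1`. -/
theorem abs_arccos_sub_arccos_le (hJ : Convex ℝ J) (hM : 0 ≤ M)
    (hh : ∀ u ∈ J, HasDerivWithinAt h (h' u) J u) (habs : ∀ u ∈ J, |h u| ≤ 1)
    (hh' : ∀ u ∈ J, |h' u| ≤ M * √(1 - h u ^ 2)) {a b : ℝ} (ha : a ∈ J) (hb : b ∈ J) :
    |arccos (h b) - arccos (h a)| ≤ M * |b - a| := by
  have hlim : Tendsto (fun k => |arccos (k * h b) - arccos (k * h a)|) (𝓝[<] 1)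
      (𝓝 |arccos (h b) - arccos (h a)|) := by
    have hcont : Continuous fun k => |arccos (k * h b) - arccos (k * h a)| := by fun_prop
    simpa using hcont.continuousWithinAt.tendsto (x := 1) (s := Iio 1)
  refine le_of_tendsto hlim ?_
  filter_upwards [Ioo_mem_nhdsLT one_pos] with k hk
  exact abs_arccos_mul_sub_arccos_mul_le hJ hM hh habs hh' hk ha hb

end Arccos

section Curves

variable {E : Type*} [NormedAddCommGroup E] [InnerProductSpace ℝ E]

theorem angle_le_mul_abs_sub_of_norm_deriv_le {g g' : ℝ → E} {J : Set ℝ} {M : ℝ}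
    (hJ : Convex ℝ J) (hJ' : UniqueDiffOn ℝ J) (hM : 0 ≤ M)
    (hg : ∀ u ∈ J, HasDerivWithinAt g (g' u) J u) (hunit : ∀ u ∈ J, ‖g u‖ = 1)
    (hg' : ∀ u ∈ J, ‖g' u‖ ≤ M) {a b : ℝ} (ha : a ∈ J) (hb : b ∈ J) :
    angle (g b) (g a) ≤ M * |b - a| := by
  have hh : ∀ u ∈ J, HasDerivWithinAt (fun u => ⟪g u, g a⟫) ⟪g' u, g a⟫ J u := fun u hu => by
    simpa using (hg u hu).inner ℝ (hasDerivWithinAt_const u J (g a))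
  have habs : ∀ u ∈ J, |⟪g u, g a⟫| ≤ 1 := fun u hu => by
    simpa [hunit u hu, hunit a ha] using abs_real_inner_le_norm (g u) (g a)
  have hh' : ∀ u ∈ J, |⟪g' u, g a⟫| ≤ M * √(1 - ⟪g u, g a⟫ ^ 2) := fun u hu => by
    have horth : ⟪g' u, g u⟫ = 0 := by
      rw [real_inner_comm]
      exact inner_eq_zero_of_hasDerivWithinAt_of_norm_eq (hJ' u hu) hu (hg u hu) hunit
    exact (abs_inner_le_norm_mul_sqrt_one_sub_inner_sq (hunit u hu) (hunit a ha) horth).trans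
      (mul_le_mul_of_nonneg_right (hg' u hu) (sqrt_nonneg _))
  have := abs_arccos_sub_arccos_le hJ hM hh habs hh' ha hb
  rw [real_inner_self_eq_norm_sq, hunit a ha, one_pow, arccos_one, sub_zero] at this
  rw [angle, hunit a ha, hunit b hb, mul_one, div_one]
  exact (le_abs_self _).trans this

theorem cos_le_inner_of_norm_deriv_le {g g' : ℝ → E} {J : Set ℝ} {M : ℝ}
    (hJ : Convex ℝ J) (hJ' : UniqueDiffOn ℝ J) (hM : 0 ≤ M)
    (hg : ∀ u ∈ J, HasDerivWithinAt g (g' u) J u) (hunit : ∀ u ∈ J, ‖g u‖ = 1)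
    (hg' : ∀ u ∈ J, ‖g' u‖ ≤ M) {a b : ℝ} (ha : a ∈ J) (hb : b ∈ J) (hab : M * |b - a| ≤ π) :
    cos (M * (b - a)) ≤ ⟪g b, g a⟫ :=
  calc cos (M * (b - a)) = cos (M * |b - a|) := by rw [← cos_abs, abs_mul, abs_of_nonneg hM]
    _ ≤ cos (angle (g b) (g a)) := cos_le_cos_of_nonneg_of_le_pi (angle_nonneg _ _) hab
        (angle_le_mul_abs_sub_of_norm_deriv_le hJ hJ' hM hg hunit hg' ha hb)
    _ = ⟪g b, g a⟫ := by rw [cos_angle, hunit b hb, hunit a ha, mul_one, div_one]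

theorem two_div_mul_sin_le_inner_sub {γ T : ℝ → E} {u : E} {a b M : ℝ} (hM : M ≠ 0)
    (hab : a ≤ b) (hγ : ∀ s ∈ Icc a b, HasDerivWithinAt γ (T s) (Icc a b) s)
    (hT : ∀ s ∈ Icc a b, cos (M * (s - (a + b) / 2)) ≤ ⟪T s, u⟫) :
    2 / M * sin (M / 2 * (b - a)) ≤ ⟪γ b - γ a, u⟫ := by
  set φ : ℝ → ℝ := fun s => ⟪γ s, u⟫ - sin (M * (s - (a + b) / 2)) / M
  have hφ : ∀ s ∈ Icc a b,
      HasDerivWithinAt φ (⟪T s, u⟫ - cos (M * (s - (a + b) / 2))) (Icc a b) s := by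
    intro s hs
    have hinner : HasDerivWithinAt (fun s => ⟪γ s, u⟫) ⟪T s, u⟫ (Icc a b) s := by
      simpa using (hγ s hs).inner ℝ (hasDerivWithinAt_const s _ u)
    have hsin : HasDerivAt (fun s => sin (M * (s - (a + b) / 2)) / M)
        (cos (M * (s - (a + b) / 2))) s := by
      simpa [hM] using (((hasDerivAt_id s).sub_const ((a + b) / 2)).const_mul M).sin.div_const M
    exact hinner.sub hsin.hasDerivWithinAt
  have hmono : MonotoneOn φ (Icc a b) := by
    refine monotoneOn_of_hasDerivWithinAt_nonneg
      (f' := fun s => ⟪T s, u⟫ - cos (M * (s - (a + b) / 2))) (convex_Icc a b)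
      (fun s hs => (hφ s hs).continuousWithinAt) (fun s hs => ?_) (fun s hs => ?_)
    · rw [interior_Icc] at hs ⊢
      exact (hφ s (Ioo_subset_Icc_self hs)).mono Ioo_subset_Icc_self
    · rw [interior_Icc] at hs
      exact sub_nonneg.2 (hT s (Ioo_subset_Icc_self hs))
  have hφab := hmono (left_mem_Icc.2 hab) (right_mem_Icc.2 hab) hab
  have hb : M * (b - (a + b) / 2) = M / 2 * (b - a) := by ring
  have ha : M * (a - (a + b) / 2) = -(M / 2 * (b - a)) := by ring
  simp only [φ, hb, ha, sin_neg, neg_div, sub_neg_eq_add] at hφab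
  calc 2 / M * sin (M / 2 * (b - a)) = sin (M / 2 * (b - a)) / M + sin (M / 2 * (b - a)) / M := by
        ring
    _ ≤ ⟪γ b - γ a, u⟫ := by rw [inner_sub_left]; linarith

end Curves

theorem ContDiffOn.deriv_of_differentiableAt {𝕜 F : Type*} [NontriviallyNormedField 𝕜]
    [NormedAddCommGroup F] [NormedSpace 𝕜 F] {n : WithTop ℕ∞} {f : 𝕜 → F} {s : Set 𝕜}
    (hf : ContDiffOn 𝕜 (n + 1) f s) (hs : UniqueDiffOn 𝕜 s)
    (hdiff : ∀ x ∈ s, DifferentiableAt 𝕜 f x) : ContDiffOn 𝕜 n (deriv f) s :=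
  (hf.derivWithin hs le_rfl).congr fun x hx => ((hdiff x hx).derivWithin (hs x hx)).symm

theorem norm_derivWithin_Icc_le {F : Type*} [NormedAddCommGroup F] [NormedSpace ℝ F]
    {f : ℝ → F} {a b M : ℝ} (hab : a < b) (hf : ContinuousOn (derivWithin f (Icc a b)) (Icc a b))
    (hM : ∀ x ∈ Ioo a b, ‖deriv f x‖ ≤ M) : ∀ x ∈ Icc a b, ‖derivWithin f (Icc a b) x‖ ≤ M := by
  intro x hx
  refine ContinuousWithinAt.closure_le (f := fun x => ‖derivWithin f (Icc a b) x‖)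
    (g := fun _ => M) (s := Ioo a b) (by rwa [closure_Ioo hab.ne])
    ((hf x hx).norm.mono Ioo_subset_Icc_self) continuousWithinAt_const fun y hy => ?_
  rw [derivWithin_of_mem_nhds (Icc_mem_nhds hy.1 hy.2)]
  exact hM y hy

/-- Chord-length bound for a unit-speed `C²` curve with curvature bounded by `M`:
for `0 < ε < π/M` and `t ∈ [0, L-ε]`,
`ε ≥ ‖γ(t+ε) − γ(t)‖ ≥ (2/M)·sin(Mε/2)`. -/
theorem chord_length_bound {d : ℕ} (L M : ℝ) (hM : 0 < M)
    (γ : ℝ → EuclideanSpace ℝ (Fin d))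
    (hC2 : ContDiffOn ℝ 2 γ (Set.Icc 0 L))
    (hunit : ∀ s ∈ Set.Icc (0 : ℝ) L, ‖deriv γ s‖ = 1)
    (hcurv : ∀ s ∈ Set.Icc (0 : ℝ) L, ‖deriv (deriv γ) s‖ ≤ M)
    (ε : ℝ) (hε : 0 < ε) (hεM : ε < Real.pi / M)
    (t : ℝ) (ht : t ∈ Set.Icc (0 : ℝ) (L - ε)) :
    ε ≥ ‖γ (t + ε) - γ t‖ ∧ ‖γ (t + ε) - γ t‖ ≥ (2 / M) * Real.sin (M / 2 * ε) := by
  obtain ⟨ht0, htL⟩ := ht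
  have hL : 0 < L := by linarith
  have hI := uniqueDiffOn_Icc hL
  have hγ : ∀ s ∈ Icc 0 L, HasDerivAt γ (deriv γ s) s := fun s hs =>
    (differentiableAt_of_deriv_ne_zero fun h0 => by simpa [h0] using hunit s hs).hasDerivAt
  have hT : ContDiffOn ℝ 1 (deriv γ) (Icc 0 L) :=
    hC2.deriv_of_differentiableAt hI fun s hs => (hγ s hs).differentiableAt
  have hT' : ∀ s ∈ Icc 0 L,
      HasDerivWithinAt (deriv γ) (derivWithin (deriv γ) (Icc 0 L) s) (Icc 0 L) s :=
    fun s hs => (hT.differentiableOn one_ne_zero s hs).hasDerivWithinAt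
  have hT'M := norm_derivWithin_Icc_le hL (hT.continuousOn_derivWithin hI le_rfl)
    fun s hs => hcurv s (Ioo_subset_Icc_self hs)
  have hJI : Icc t (t + ε) ⊆ Icc 0 L := Icc_subset_Icc ht0 (by linarith)
  set m := (t + (t + ε)) / 2 with hm_def
  have hm : m ∈ Icc 0 L := hJI ⟨by linarith, by linarith⟩
  have hcos : ∀ s ∈ Icc t (t + ε), cos (M * (s - m)) ≤ ⟪deriv γ s, deriv γ m⟫ := fun s hs =>
    cos_le_inner_of_norm_deriv_le (convex_Icc 0 L) hI hM.le hT' hunit hT'M hm (hJI hs) <| by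
      have hsm : |s - m| ≤ ε / 2 := abs_le.2 ⟨by linarith [hs.1], by linarith [hs.2]⟩
      have hMε : M * ε < π := by linarith [(lt_div_iff₀ hM).1 hεM]
      nlinarith
  constructor
  · simpa [abs_of_pos hε] using (convex_Icc 0 L).norm_image_sub_le_of_norm_hasDerivWithin_le
      (fun s hs => (hγ s hs).hasDerivWithinAt) (fun s hs => (hunit s hs).le)
      (hJI (left_mem_Icc.2 (by linarith))) (hJI (right_mem_Icc.2 (by linarith)))
  · calc 2 / M * sin (M / 2 * ε) = 2 / M * sin (M / 2 * (t + ε - t)) := by ring_nf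
      _ ≤ ⟪γ (t + ε) - γ t, deriv γ m⟫ := two_div_mul_sin_le_inner_sub hM.ne' (by linarith)
          (fun s hs => (hγ s (hJI hs)).hasDerivWithinAt) hcos
      _ ≤ ‖γ (t + ε) - γ t‖ := by
          simpa [hunit m hm] using real_inner_le_norm (γ (t + ε) - γ t) (deriv γ m)
end

section
/- Define f(θ) = √((L+2ε)² − max(0, L|cos θ| − 2ε)²) + √((L+ε)² − L²cos²θ) − 2·max(0, L|sin θ| − 2ε) + max(0, ε − L|sin θ|), for real θ and parameters L ≥ 0, ε > 0. Then f(θ) ≤ 8√(Lε) whenever L > 2ε, and f(θ) ≤ 10ε whenever L ≤ 2ε. -/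
/-- The angle-dependent bound function from the local stability lemma:
`f θ = √((L+2ε)² − max(0, L|cos θ| − 2ε)²) + √((L+ε)² − L²cos²θ)
       − 2·max(0, L|sin θ| − 2ε) + max(0, ε − L|sin θ|)`
is bounded by `8√(Lε)` when `L > 2ε` and by `10ε` when `L ≤ 2ε`. -/
theorem angle_bound (L ε θ : ℝ) (hL : 0 ≤ L) (hε : 0 < ε) :
    (L > 2 * ε →
      Real.sqrt ((L + 2 * ε) ^ 2 - max 0 (L * |Real.cos θ| - 2 * ε) ^ 2)
        + Real.sqrt ((L + ε) ^ 2 - L ^ 2 * Real.cos θ ^ 2)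
        - 2 * max 0 (L * |Real.sin θ| - 2 * ε)
        + max 0 (ε - L * |Real.sin θ|) ≤ 8 * Real.sqrt (L * ε)) ∧
    (L ≤ 2 * ε →
      Real.sqrt ((L + 2 * ε) ^ 2 - max 0 (L * |Real.cos θ| - 2 * ε) ^ 2)
        + Real.sqrt ((L + ε) ^ 2 - L ^ 2 * Real.cos θ ^ 2)
        - 2 * max 0 (L * |Real.sin θ| - 2 * ε)
        + max 0 (ε - L * |Real.sin θ|) ≤ 10 * ε) := by
  set s := |Real.sin θ| with hsdef
  set c := |Real.cos θ| with hcdef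
  have hs0 : 0 ≤ s := abs_nonneg _
  have hc0 : 0 ≤ c := abs_nonneg _
  have hpyth : c ^ 2 + s ^ 2 = 1 := by
    rw [hsdef, hcdef, sq_abs, sq_abs]; exact Real.cos_sq_add_sin_sq θ
  have hcos2 : Real.cos θ ^ 2 = c ^ 2 := (sq_abs _).symm
  rw [hcos2]
  have hc1 : c ≤ 1 := by nlinarith
  set K := Real.sqrt (L * ε) with hKdef
  have hK0 : 0 ≤ K := Real.sqrt_nonneg _
  have hK2 : K ^ 2 = L * ε := Real.sq_sqrt (by positivity)
  have hmax1 : -(2 * max 0 (L * s - 2 * ε)) ≤ 4 * ε - 2 * (L * s) := by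
    have := le_max_right 0 (L * s - 2 * ε); linarith
  have hmax2 : max 0 (ε - L * s) ≤ ε := by
    apply max_le (le_of_lt hε); nlinarith
  constructor
  · intro hL2
    have hεK : ε ≤ (70711/100000) * K := by nlinarith [sq_nonneg (ε - (70711/100000) * K)]
    -- term 1
    have h1 : Real.sqrt ((L + 2 * ε) ^ 2 - max 0 (L * c - 2 * ε) ^ 2)
        ≤ L * s + (28285/10000) * K := by
      have harg : (L + 2 * ε) ^ 2 - max 0 (L * c - 2 * ε) ^ 2
          ≤ (L * s + (28285/10000) * K) ^ 2 := by
        rcases le_total (L * c) (2 * ε) with h | h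
        · rw [max_eq_left (by linarith)]
          have hLc2 : (L * c) * (L * c) ≤ (2 * ε) * (2 * ε) :=
            mul_self_le_mul_self (mul_nonneg hL hc0) h
          nlinarith [mul_nonneg (mul_nonneg hL hs0) hK0, sq_nonneg (L * c)]
        · rw [max_eq_right (by linarith)]
          have hexp : (L + 2 * ε) ^ 2 - (L * c - 2 * ε) ^ 2
              = L ^ 2 * s ^ 2 + 4 * L * ε * (1 + c) := by
            linear_combination (-(L ^ 2)) * hpyth
          rw [hexp]
          nlinarith [mul_nonneg (mul_nonneg hL hs0) hK0,
            mul_nonneg (mul_nonneg hL hε.le) (sub_nonneg.mpr hc1)]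
      calc Real.sqrt ((L + 2 * ε) ^ 2 - max 0 (L * c - 2 * ε) ^ 2)
          ≤ Real.sqrt ((L * s + (28285/10000) * K) ^ 2) := Real.sqrt_le_sqrt harg
        _ = L * s + (28285/10000) * K := Real.sqrt_sq (by positivity)
    -- term 2
    have h2 : Real.sqrt ((L + ε) ^ 2 - L ^ 2 * c ^ 2) ≤ L * s + (15812/10000) * K := by
      have harg : (L + ε) ^ 2 - L ^ 2 * c ^ 2 ≤ (L * s + (15812/10000) * K) ^ 2 := by
        nlinarith [mul_nonneg (mul_nonneg hL hs0) hK0]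
      calc Real.sqrt ((L + ε) ^ 2 - L ^ 2 * c ^ 2)
          ≤ Real.sqrt ((L * s + (15812/10000) * K) ^ 2) := Real.sqrt_le_sqrt harg
        _ = L * s + (15812/10000) * K := Real.sqrt_sq (by positivity)
    linarith
  · intro hL2
    have h1 : Real.sqrt ((L + 2 * ε) ^ 2 - max 0 (L * c - 2 * ε) ^ 2) ≤ L + 2 * ε := by
      calc Real.sqrt ((L + 2 * ε) ^ 2 - max 0 (L * c - 2 * ε) ^ 2)
          ≤ Real.sqrt ((L + 2 * ε) ^ 2) := Real.sqrt_le_sqrt (by nlinarith [sq_nonneg (max 0 (L * c - 2 * ε))])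
        _ = L + 2 * ε := Real.sqrt_sq (by linarith)
    have h2 : Real.sqrt ((L + ε) ^ 2 - L ^ 2 * c ^ 2) ≤ L + ε := by
      calc Real.sqrt ((L + ε) ^ 2 - L ^ 2 * c ^ 2)
          ≤ Real.sqrt ((L + ε) ^ 2) := Real.sqrt_le_sqrt (by nlinarith [sq_nonneg (L * c)])
        _ = L + ε := Real.sqrt_sq (by linarith)
    have hmax3 : max 0 (L * s - 2 * ε) ≥ 0 := le_max_left _ _
    linarith
end

section
/- Let ECT_X, ECT_Y : S^{d−1} × [−a, a] → ℤ be integrable in t for each fixed v, with ‖ECT_X − ECT_Y‖ := sup_v ∫_{−a}^{a} |ECT_X(v,t) − ECT_Y(v,t)| dt = δ. Define SECT_X(v,t) = ∫_{−a}^t (ECT_X(v,x) − m_X(v)) dx where m_X(v) = (1/2a)∫_{−a}^a ECT_X(v,x) dx, and similarly for Y. Then sup_v ∫_{−a}^{a} |SECT_X(v,t) − SECT_Y(v,t)| dt ≤ (2a + 1)δ. -/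
/-!
Write `g = E v - F v` and `c = (t + a) / (2a) ∈ [0, 1]`. At height `t` the difference of the
SECTs is `∫_{[-a,t]} g - c ∫_{[-a,a]} g`, a convex combination of `∫_{[-a,t]} g` and
`-∫_{(t,a]} g`, so it is bounded by `∫_{[-a,a]} |g| ≤ δ`. Integrating this pointwise bound
over an interval of length `2a` gives `2aδ ≤ (2a + 1)δ`.
-/

open MeasureTheory

lemma abs_sub_mul_le_max {x y c : ℝ} (hc₀ : 0 ≤ c) (hc₁ : c ≤ 1) :
    |x - c * y| ≤ max |x| |x - y| := by
  have hconv : x - c * y = (1 - c) * x + c * (x - y) := by ring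
  calc |x - c * y| ≤ (1 - c) * |x| + c * |x - y| := by
        rw [hconv]
        refine (abs_add_le _ _).trans_eq ?_
        rw [abs_mul, abs_mul, abs_of_nonneg (sub_nonneg.2 hc₁), abs_of_nonneg hc₀]
    _ ≤ (1 - c) * max |x| |x - y| + c * max |x| |x - y| := by
        have h1c : 0 ≤ 1 - c := sub_nonneg.2 hc₁
        gcongr
        · exact le_max_left _ _
        · exact le_max_right _ _
    _ = max |x| |x - y| := by ring

section SetIntegral

variable {α : Type*} [MeasurableSpace α] {μ : Measure α} {s u : Set α}

lemma abs_setIntegral_le_setIntegral_abs_of_subset {g : α → ℝ} (hsu : s ⊆ u)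
    (hg : IntegrableOn g u μ) : |∫ x in s, g x ∂μ| ≤ ∫ x in u, |g x| ∂μ :=
  abs_integral_le_integral_abs.trans <|
    setIntegral_mono_set hg.abs (Filter.Eventually.of_forall fun _ => abs_nonneg _)
      (Filter.Eventually.of_forall hsu)

lemma abs_setIntegral_sub_mul_setIntegral_le {g : α → ℝ} {c : ℝ}
    (hs : NullMeasurableSet s μ) (hsu : s ⊆ u) (hg : IntegrableOn g u μ)
    (hc₀ : 0 ≤ c) (hc₁ : c ≤ 1) :
    |∫ x in s, g x ∂μ - c * ∫ x in u, g x ∂μ| ≤ ∫ x in u, |g x| ∂μ := by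
  have hrest : ∫ x in s, g x ∂μ - ∫ x in u, g x ∂μ = -∫ x in u \ s, g x ∂μ := by
    rw [setIntegral_sdiff₀ hs hg hsu]; ring
  refine (abs_sub_mul_le_max hc₀ hc₁).trans (max_le ?_ ?_)
  · exact abs_setIntegral_le_setIntegral_abs_of_subset hsu hg
  · rw [hrest, abs_neg]
    exact abs_setIntegral_le_setIntegral_abs_of_subset Set.sdiff_subset hg

lemma abs_sub_setIntegral_sub_mul_setIntegral_le {f g : α → ℝ} {c : ℝ}
    (hs : NullMeasurableSet s μ) (hsu : s ⊆ u)
    (hf : IntegrableOn f u μ) (hg : IntegrableOn g u μ) (hc₀ : 0 ≤ c) (hc₁ : c ≤ 1) :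
    |(∫ x in s, f x ∂μ - c * ∫ x in u, f x ∂μ) - (∫ x in s, g x ∂μ - c * ∫ x in u, g x ∂μ)|
      ≤ ∫ x in u, |f x - g x| ∂μ := by
  have hdiff : (∫ x in s, f x ∂μ - c * ∫ x in u, f x ∂μ) -
      (∫ x in s, g x ∂μ - c * ∫ x in u, g x ∂μ) =
        ∫ x in s, (f x - g x) ∂μ - c * ∫ x in u, (f x - g x) ∂μ := by
    rw [integral_sub (hf.mono_set hsu) (hg.mono_set hsu), integral_sub hf hg]; ring
  rw [hdiff]
  exact abs_setIntegral_sub_mul_setIntegral_le hs hsu (hf.sub hg) hc₀ hc₁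

end SetIntegral

lemma add_div_two_mul_mem_Icc_zero_one {a t : ℝ} (ha : 0 < a) (ht : t ∈ Set.Icc (-a) a) :
    (t + a) / (2 * a) ∈ Set.Icc (0 : ℝ) 1 := by
  obtain ⟨ht₁, ht₂⟩ := ht
  constructor
  · exact div_nonneg (by linarith) (by linarith)
  · rw [div_le_one (by linarith)]; linarith

/-- If the ECTs of two shapes (viewed as integer-valued functions of a direction `v` and a
height `t ∈ [-a,a]`) are within `δ` in the sup-over-directions-of-`L¹` norm, then their
SECTs are within `(2a+1)δ`. -/
theorem sect_stability {d : ℕ} (a δ : ℝ) (ha : 0 < a)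
    (E F : EuclideanSpace ℝ (Fin d) → ℝ → ℤ)
    (hE : ∀ v : EuclideanSpace ℝ (Fin d), ‖v‖ = 1 →
      IntegrableOn (fun t => (E v t : ℝ)) (Set.Icc (-a) a))
    (hF : ∀ v : EuclideanSpace ℝ (Fin d), ‖v‖ = 1 →
      IntegrableOn (fun t => (F v t : ℝ)) (Set.Icc (-a) a))
    (hδ : ∀ v : EuclideanSpace ℝ (Fin d), ‖v‖ = 1 →
      (∫ t in Set.Icc (-a) a, |(E v t : ℝ) - (F v t : ℝ)|) ≤ δ) :
    ∀ v : EuclideanSpace ℝ (Fin d), ‖v‖ = 1 →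
      (∫ t in Set.Icc (-a) a,
          |((∫ x in Set.Icc (-a) t, (E v x : ℝ)) -
              (t + a) / (2 * a) * ∫ x in Set.Icc (-a) a, (E v x : ℝ)) -
            ((∫ x in Set.Icc (-a) t, (F v x : ℝ)) -
              (t + a) / (2 * a) * ∫ x in Set.Icc (-a) a, (F v x : ℝ))|) ≤
        (2 * a + 1) * δ := by
  intro v hv
  have hδ₀ : 0 ≤ δ := (integral_nonneg fun _ => abs_nonneg _).trans (hδ v hv)
  have hpointwise : ∀ t ∈ Set.Icc (-a) a,
      ‖|((∫ x in Set.Icc (-a) t, (E v x : ℝ)) -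
            (t + a) / (2 * a) * ∫ x in Set.Icc (-a) a, (E v x : ℝ)) -
          ((∫ x in Set.Icc (-a) t, (F v x : ℝ)) -
            (t + a) / (2 * a) * ∫ x in Set.Icc (-a) a, (F v x : ℝ))|‖ ≤ δ := by
    intro t ht
    obtain ⟨hc₀, hc₁⟩ := add_div_two_mul_mem_Icc_zero_one ha ht
    rw [Real.norm_eq_abs, abs_abs]
    exact (abs_sub_setIntegral_sub_mul_setIntegral_le measurableSet_Icc.nullMeasurableSet
      (Set.Icc_subset_Icc_right ht.2) (hE v hv) (hF v hv) hc₀ hc₁).trans (hδ v hv)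
  have hlength : volume.real (Set.Icc (-a) a) = 2 * a := by
    rw [Real.volume_real_Icc_of_le (by linarith)]; ring
  calc _ ≤ ‖∫ t in Set.Icc (-a) a, _‖ := Real.le_norm_self _
    _ ≤ δ * (2 * a) := by
        exact (norm_setIntegral_le_of_norm_le_const measure_Icc_lt_top hpointwise).trans_eq
          (by rw [hlength])
    _ ≤ (2 * a + 1) * δ := by nlinarith
end
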